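/- arXiv:1603.03198 — 3 statements merged into one kernel-verified Lean document; each statement's English description precedes it below -/
import Mathlib

section
/- Let 0 < T̄, let f₀ : [0,T̄] → ℝ be Lebesgue-integrable, and let a : [0,T̄] × [0,T̄] → ℝ be measurable with a(s,u) = 0 whenever u < s and ∫_0^T̄ ∫_0^T̄ |a(s,u)| ds du < ∞. Define f(t,u) := f₀(u) + ∫_0^t a(s,u) ds. Then for all 0 ≤ t ≤ T ≤ T̄: ∫_t^T f(t,u) du = ∫_0^T f₀(u) du − ∫_0^t f(s,s) ds + ∫_0^t (∫_s^T a(s,u) du) ds, where s ↦ f(s,s) = f₀(s) + ∫_0^s a(v,s) dv is Lebesgue-integrable on [0,t]. -/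
/-!
Put `g u := ∫_0^t a(s,u) ds`. Since `a(s,u)` vanishes for `u < s`, the diagonal integral
`∫_0^s a(v,s) dv` equals `g s` for `s ≤ t`, and `∫_s^T a(s,u) du = ∫_0^T a(s,u) du`; by Fubini the
last term is then `∫_0^T g`. Both sides thus reduce to `∫_t^T (f₀ + g)`.
-/

open MeasureTheory Set

section IntervalIntegral

variable {E : Type*} [NormedAddCommGroup E] [NormedSpace ℝ E] {f : ℝ → E} {a b c : ℝ}

theorem intervalIntegral_eq_of_forall_gt_eq_zero (hab : a ≤ b) (hbc : b ≤ c)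
    (hf : ∀ x, b < x → f x = 0) : ∫ x in a..b, f x = ∫ x in a..c, f x := by
  rw [intervalIntegral.integral_of_le hab, intervalIntegral.integral_of_le (hab.trans hbc)]
  exact (setIntegral_eq_of_subset_of_forall_sdiff_eq_zero measurableSet_Ioc
    (Ioc_subset_Ioc_right hbc) fun x hx => hf x (lt_of_not_ge fun h => hx.2 ⟨hx.1.1, h⟩)).symm

-- Pass to `Ico` so that the removed piece `[a, b)` lies strictly left of `b`.
theorem intervalIntegral_eq_of_forall_lt_eq_zero (hab : a ≤ b) (hbc : b ≤ c)
    (hf : ∀ x, x < b → f x = 0) : ∫ x in b..c, f x = ∫ x in a..c, f x := by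
  rw [intervalIntegral.integral_of_le hbc, intervalIntegral.integral_of_le (hab.trans hbc),
    ← integral_Ico_eq_integral_Ioc, ← integral_Ico_eq_integral_Ioc]
  exact (setIntegral_eq_of_subset_of_forall_sdiff_eq_zero measurableSet_Ico
    (Ico_subset_Ico_left hab) fun x hx => hf x (lt_of_not_ge fun h => hx.2 ⟨h, hx.1.2⟩)).symm

theorem MeasureTheory.IntegrableOn.intervalIntegrable_intervalIntegral_left {F : ℝ → ℝ → E} {d : ℝ}
    (hF : IntegrableOn (Function.uncurry F) (uIoc a b ×ˢ uIoc c d)) :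
    IntervalIntegrable (fun y => ∫ x in a..b, F x y) volume c d := by
  rw [intervalIntegrable_iff]
  simp_rw [intervalIntegral.intervalIntegral_eq_integral_uIoc]
  rw [IntegrableOn, Measure.volume_eq_prod, ← Measure.prod_restrict] at hF
  exact hF.integral_prod_right.smul _

end IntervalIntegral

theorem stmt3_general (Tb : ℝ) (f₀ : ℝ → ℝ) (a : ℝ → ℝ → ℝ)
    (hf₀ : IntegrableOn f₀ (Set.Icc (0 : ℝ) Tb))
    (ha_zero : ∀ s u : ℝ, u < s → a s u = 0)
    (ha_int : IntegrableOn (Function.uncurry a) (Set.Icc 0 Tb ×ˢ Set.Icc 0 Tb)) :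
    ∀ t T : ℝ, 0 ≤ t → t ≤ T → T ≤ Tb →
      IntegrableOn (fun s => f₀ s + ∫ v in (0 : ℝ)..s, a v s) (Set.Icc (0 : ℝ) t) ∧
      (∫ u in t..T, (f₀ u + ∫ s in (0 : ℝ)..t, a s u))
        = (∫ u in (0 : ℝ)..T, f₀ u)
          - (∫ s in (0 : ℝ)..t, (f₀ s + ∫ v in (0 : ℝ)..s, a v s))
          + ∫ s in (0 : ℝ)..t, ∫ u in s..T, a s u := by
  intro t T ht htT hTTb
  have h0T : 0 ≤ T := ht.trans htT
  have ha : IntegrableOn (Function.uncurry a) (uIoc 0 t ×ˢ uIoc 0 T) := by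
    rw [uIoc_of_le ht, uIoc_of_le h0T]
    exact ha_int.mono_set (prod_mono (Ioc_subset_Icc_self.trans (Icc_subset_Icc_right
      (htT.trans hTTb))) (Ioc_subset_Icc_self.trans (Icc_subset_Icc_right hTTb)))
  set g : ℝ → ℝ := fun u => ∫ s in (0 : ℝ)..t, a s u
  have hg : IntervalIntegrable g volume 0 T := ha.intervalIntegrable_intervalIntegral_left
  have hf : IntervalIntegrable f₀ volume 0 T :=
    (hf₀.mono_set (by rw [uIcc_of_le h0T]; exact Icc_subset_Icc_right hTTb)).intervalIntegrable
  have hdiag : EqOn (fun s => f₀ s + ∫ v in (0 : ℝ)..s, a v s) (fun s => f₀ s + g s) (Icc 0 t) :=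
    fun s hs => by simp only [g, intervalIntegral_eq_of_forall_gt_eq_zero hs.1 hs.2 (ha_zero · s)]
  have htail : EqOn (fun s => ∫ u in s..T, a s u) (fun s => ∫ u in (0 : ℝ)..T, a s u) (Icc 0 t) :=
    fun s hs => intervalIntegral_eq_of_forall_lt_eq_zero hs.1 (hs.2.trans htT) (ha_zero s)
  have hsub : uIcc 0 t ⊆ uIcc 0 T := uIcc_subset_uIcc left_mem_uIcc (mem_uIcc_of_le ht htT)
  have hsub' : uIcc t T ⊆ uIcc 0 T := uIcc_subset_uIcc (mem_uIcc_of_le ht htT) right_mem_uIcc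
  refine ⟨?_, ?_⟩
  · refine IntegrableOn.congr_fun ?_ hdiag.symm measurableSet_Icc
    rw [← intervalIntegrable_iff_integrableOn_Icc_of_le ht]
    exact (hf.mono_set hsub).add (hg.mono_set hsub)
  · rw [← uIcc_of_le ht] at hdiag htail
    rw [intervalIntegral.integral_congr hdiag, intervalIntegral.integral_congr htail,
      intervalIntegral_intervalIntegral_swap ha,
      intervalIntegral.integral_add (hf.mono_set hsub) (hg.mono_set hsub),
      intervalIntegral.integral_add (hf.mono_set hsub') (hg.mono_set hsub'),
      ← intervalIntegral.integral_add_adjacent_intervals (hf.mono_set hsub) (hf.mono_set hsub'),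
      ← intervalIntegral.integral_add_adjacent_intervals (hg.mono_set hsub) (hg.mono_set hsub')]
    ring

/-- deterministic HJM reparametrization. With forward rate
`f(t,u) = f₀(u) + ∫_0^t a(s,u) ds`, where `a(s,u) = 0` for `u < s` and `a` is integrable
on the square, one has for `0 ≤ t ≤ T ≤ T̄` that `s ↦ f(s,s)` is integrable on `[0,t]` and
`∫_t^T f(t,u) du = ∫_0^T f₀(u) du − ∫_0^t f(s,s) ds + ∫_0^t (∫_s^T a(s,u) du) ds`. -/
theorem stmt3 (Tb : ℝ) (hTb : 0 < Tb) (f₀ : ℝ → ℝ) (a : ℝ → ℝ → ℝ)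
    (hf₀ : IntegrableOn f₀ (Set.Icc (0 : ℝ) Tb))
    (ha_meas : Measurable (Function.uncurry a))
    (ha_zero : ∀ s u : ℝ, u < s → a s u = 0)
    (ha_int : IntegrableOn (Function.uncurry a) (Set.Icc 0 Tb ×ˢ Set.Icc 0 Tb)) :
    ∀ t T : ℝ, 0 ≤ t → t ≤ T → T ≤ Tb →
      IntegrableOn (fun s => f₀ s + ∫ v in (0 : ℝ)..s, a v s) (Set.Icc (0 : ℝ) t) ∧
      (∫ u in t..T, (f₀ u + ∫ s in (0 : ℝ)..t, a s u))
        = (∫ u in (0 : ℝ)..T, f₀ u)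
          - (∫ s in (0 : ℝ)..t, (f₀ s + ∫ v in (0 : ℝ)..s, a v s))
          + ∫ s in (0 : ℝ)..t, ∫ u in s..T, a s u :=
  stmt3_general Tb f₀ a hf₀ ha_zero ha_int
end

section
/- Let T̄ > 0 and let μ be a finite Borel measure on [0,T̄] × [0,T̄] with μ({(s,u) : u ≤ s}) = 0. Let g₀ : [0,T̄] → ℝ and α : [0,T̄] × [0,T̄] → ℝ be measurable with α(v,u) = 0 whenever u < v, ∫_{[0,T̄]×[0,T̄]} |g₀(u)| dμ(s,u) < ∞ and ∫_{[0,T̄]×[0,T̄]} ∫_0^T̄ |α(v,u)| dv dμ(s,u) < ∞. Define g(t,u) := g₀(u) + ∫_0^t α(v,u) dv. Then for all 0 ≤ t ≤ T ≤ T̄: ∫_{[0,t]×(t,T]} g(t,u) dμ(s,u) = ∫_0^t ( ∫_{[0,v]×(v,T]} α(v,u) dμ(s,u) ) dv + ∫_{[0,t]×[0,T]} g(s,u) dμ(s,u) − ∫_{[0,T̄]×[0,t]} g(u,u) dμ(s,u). -/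
/-!
Write `g(t,u) = g₀(u) + ∫_0^t α(v,u) dv`. Since `α(v,u) = 0` for `v > u`, the rate freezes at
maturity: `g(u,u) = g(t,u)` for `u ≤ t`. As `μ` is carried by `{s < u}`, the last integral is
therefore `∫ g(t,u)` over `[0,t] × [0,t]`, and together with the left-hand side it makes up
`∫ g(t,u)` over `B = [0,t] × [0,T]`. What remains is
`∫_B (g(t,u) - g(s,u)) dμ = ∫_B ∫_{(s,t]} α(v,u) dv dμ`, which Fubini turns into
`∫_0^t ∫_{B ∩ {s < v}} α(v,u) dμ dv`. For all but countably many `v` neither coordinate of `μ`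
has an atom at `v`, and then `B ∩ {s < v}` may be replaced by `[0,v] × (v,T]`: they differ only
where `u ≤ v`, on which `α(v,u)` vanishes `μ`-a.e.
-/

open MeasureTheory Set Function

theorem intervalIntegral_eq_of_forall_gt_eq_zero_s5 {f : ℝ → ℝ} {a u t : ℝ}
    (hf : ∀ v, u < v → f v = 0) (hau : a ≤ u) (hut : u ≤ t) :
    ∫ v in a..u, f v = ∫ v in a..t, f v := by
  have hf_eq : EqOn f ((Iic u).indicator f) (Ioc a t) := fun v _ => by
    by_cases hv : v ≤ u
    · rw [indicator_of_mem (mem_Iic.2 hv)]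
    · rw [indicator_of_notMem (notMem_Iic.2 (not_le.1 hv)), hf v (not_le.1 hv)]
  rw [intervalIntegral.integral_of_le hau, intervalIntegral.integral_of_le (hau.trans hut),
    setIntegral_congr_fun measurableSet_Ioc hf_eq, setIntegral_indicator measurableSet_Iic,
    Ioc_inter_Iic, inf_eq_right.2 hut]

theorem ae_measure_level_set_eq_zero {X β : Type*} [MeasurableSpace X] [MeasurableSpace β]
    [MeasurableSingletonClass β] {μ : Measure X} [SFinite μ] (ν : Measure β) [NullSingletonClass ν]
    {π : X → β} (hπ : Measurable π) :
    ∀ᵐ v ∂ν, μ {x | π x = v} = 0 :=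
  ae_iff.2 <| measure_mono_null (fun _ hv => pos_iff_ne_zero.2 hv)
    ((Measure.countable_meas_level_set_pos hπ).measure_zero ν)

theorem integrable_prod_of_lintegral_lt_top {X : Type*} [MeasurableSpace X] {μ : Measure X}
    {ν : Measure ℝ} [SFinite ν] {f : X × ℝ → ℝ} (hf : Measurable f)
    (h : ∫⁻ x, ∫⁻ v, ENNReal.ofReal |f (x, v)| ∂ν ∂μ < ⊤) : Integrable f (μ.prod ν) := by
  refine ⟨hf.aestronglyMeasurable, ?_⟩
  rw [hasFiniteIntegral_iff_norm, lintegral_prod _ hf.norm.ennreal_ofReal.aemeasurable]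
  simpa only [Real.norm_eq_abs] using h

theorem integrable_intervalIntegral_of_ae_mem {X : Type*} [MeasurableSpace X] {μ : Measure X}
    {f : X → ℝ → ℝ} {a b : ℝ}
    (hf : Integrable (uncurry f) (μ.prod (volume.restrict (Ioc a b))))
    {φ : X → ℝ} (hφ : Measurable φ) (hφab : ∀ᵐ x ∂μ, φ x ∈ Icc a b) :
    Integrable (fun x => ∫ v in a..φ x, f x v) μ := by
  have hS : MeasurableSet {q : X × ℝ | q.2 ≤ φ q.1} :=
    measurableSet_le measurable_snd (hφ.comp measurable_fst)
  refine (hf.indicator hS).integral_prod_left.congr ?_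
  filter_upwards [hφab] with x hx
  change ∫ v in Ioc a b, (Iic (φ x)).indicator (f x) v = _
  rw [setIntegral_indicator measurableSet_Iic, Ioc_inter_Iic, inf_eq_right.2 hx.2,
    intervalIntegral.integral_of_le hx.1]

theorem integral_integral_Ioc_swap {X : Type*} [MeasurableSpace X] {μ : Measure X} [SFinite μ]
    {f : X → ℝ → ℝ} {a t : ℝ} (hf : Integrable (uncurry f) (μ.prod (volume.restrict (Ioc a t))))
    {φ : X → ℝ} (hφ : Measurable φ) (haφ : ∀ᵐ x ∂μ, a ≤ φ x) :
    ∫ x, (∫ v in Ioc (φ x) t, f x v) ∂μ = ∫ v in Ioc a t, ∫ x in {x | φ x < v}, f x v ∂μ := by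
  set S : Set (X × ℝ) := {q | φ q.1 < q.2}
  have hS : MeasurableSet S := measurableSet_lt (hφ.comp measurable_fst) measurable_snd
  calc ∫ x, (∫ v in Ioc (φ x) t, f x v) ∂μ
      = ∫ x, (∫ v in Ioc a t, S.indicator (uncurry f) (x, v)) ∂μ := by
        refine integral_congr_ae ?_
        filter_upwards [haφ] with x hx
        change _ = ∫ v in Ioc a t, (Ioi (φ x)).indicator (f x) v
        rw [setIntegral_indicator measurableSet_Ioi, Ioc_inter_Ioi, sup_eq_right.2 hx]
    _ = ∫ v in Ioc a t, ∫ x, S.indicator (uncurry f) (x, v) ∂μ :=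
        integral_integral_swap (f := fun x v => S.indicator (uncurry f) (x, v)) (hf.indicator hS)
    _ = ∫ v in Ioc a t, ∫ x in {x | φ x < v}, f x v ∂μ := by
        congr 1 with v
        exact integral_indicator (measurableSet_lt hφ measurable_const)

noncomputable def forwardRate (g₀ : ℝ → ℝ) (α : ℝ → ℝ → ℝ) (t u : ℝ) : ℝ :=
  g₀ u + ∫ v in (0 : ℝ)..t, α v u

section ForwardRate

variable {g₀ : ℝ → ℝ} {α : ℝ → ℝ → ℝ}

theorem forwardRate_self_eq_of_le {t u : ℝ} (hα_zero : ∀ v, u < v → α v u = 0) (hu : 0 ≤ u)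
    (hut : u ≤ t) : forwardRate g₀ α u u = forwardRate g₀ α t u := by
  rw [forwardRate, forwardRate, intervalIntegral_eq_of_forall_gt_eq_zero_s5 hα_zero hu hut]

theorem forwardRate_sub_forwardRate {s t u b : ℝ} (hα : IntegrableOn (α · u) (Ioc 0 b))
    (hs : 0 ≤ s) (hst : s ≤ t) (htb : t ≤ b) :
    forwardRate g₀ α t u - forwardRate g₀ α s u = ∫ v in Ioc s t, α v u := by
  have hint : ∀ c ≤ b, 0 ≤ c → IntervalIntegrable (α · u) volume 0 c := fun c hcb hc =>
    (intervalIntegrable_iff_integrableOn_Ioc_of_le hc).2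
      (hα.mono_set (Ioc_subset_Ioc_right hcb))
  rw [forwardRate, forwardRate, add_sub_add_left_eq_sub,
    intervalIntegral.integral_interval_sub_left (hint t htb (hs.trans hst))
      (hint s (hst.trans htb) hs), intervalIntegral.integral_of_le hst]

theorem integrable_forwardRate {μ : Measure (ℝ × ℝ)} [SFinite μ] {b : ℝ}
    (hg₀ : Integrable (fun p : ℝ × ℝ => g₀ p.2) μ)
    (hα : Integrable (fun q : (ℝ × ℝ) × ℝ => α q.2 q.1.2) (μ.prod (volume.restrict (Ioc 0 b))))
    {φ : ℝ × ℝ → ℝ} (hφ : Measurable φ) (hφb : ∀ᵐ p ∂μ, φ p ∈ Icc 0 b) :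
    Integrable (fun p => forwardRate g₀ α (φ p) p.2) μ :=
  hg₀.add (integrable_intervalIntegral_of_ae_mem (f := fun p v => α v p.2) hα hφ hφb)

theorem setIntegral_fst_lt_eq_setIntegral_Icc_prod_Ioc {μ : Measure (ℝ × ℝ)} {t T v : ℝ}
    (hα_zero : ∀ u, u < v → α v u = 0) (hvt : v ≤ t)
    (hfst : μ {p | p.1 = v} = 0) (hsnd : μ {p | p.2 = v} = 0) :
    ∫ p in {p : ℝ × ℝ | p.1 < v}, α v p.2 ∂μ.restrict (Icc 0 t ×ˢ Icc 0 T)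
      = ∫ p in Icc 0 v ×ˢ Ioc v T, α v p.2 ∂μ := by
  have hne : ∀ᵐ p ∂μ, p.1 ≠ v ∧ p.2 ≠ v :=
    (ae_iff.2 (by simpa using hfst)).and (ae_iff.2 (by simpa using hsnd))
  rw [Measure.restrict_restrict (measurableSet_lt measurable_fst measurable_const),
    ← integral_indicator ((measurableSet_lt measurable_fst measurable_const).inter
      (measurableSet_Icc.prod measurableSet_Icc)),
    ← integral_indicator (measurableSet_Icc.prod measurableSet_Ioc)]
  refine integral_congr_ae ?_
  filter_upwards [hne] with p ⟨h1, h2⟩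
  simp only [indicator_apply, mem_inter_iff, mem_prod, mem_Icc, mem_Ioc, mem_ofPred_eq]
  split_ifs with hD hE hE
  · rfl
  · exact hα_zero _ (lt_of_le_of_ne (by grind) h2)
  · grind
  · rfl

theorem setIntegral_forwardRate_self {μ : Measure (ℝ × ℝ)} {b t : ℝ}
    (hα_zero : ∀ v u, u < v → α v u = 0) (hlt : ∀ᵐ p ∂μ, p.1 < p.2) (htb : t ≤ b) :
    ∫ p in Icc 0 b ×ˢ Icc 0 t, forwardRate g₀ α p.2 p.2 ∂μ
      = ∫ p in Icc 0 t ×ˢ Icc 0 t, forwardRate g₀ α t p.2 ∂μ := by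
  have hset : (Icc 0 b ×ˢ Icc 0 t : Set (ℝ × ℝ)) =ᵐ[μ] Icc 0 t ×ˢ Icc 0 t := by
    refine Filter.eventuallyEq_set.2 ?_
    filter_upwards [hlt] with p hp
    simp only [mem_prod, mem_Icc]
    grind
  rw [setIntegral_congr_set hset]
  exact setIntegral_congr_fun (measurableSet_Icc.prod measurableSet_Icc) fun p hp =>
    forwardRate_self_eq_of_le (hα_zero · p.2) hp.2.1 hp.2.2

theorem setIntegral_integral_Ioc_fst {μ : Measure (ℝ × ℝ)} [SFinite μ] {b t T : ℝ}
    (hα : Integrable (fun q : (ℝ × ℝ) × ℝ => α q.2 q.1.2) (μ.prod (volume.restrict (Ioc 0 b))))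
    (hα_zero : ∀ v u, u < v → α v u = 0) (ht : 0 ≤ t) (htb : t ≤ b) :
    ∫ p in Icc 0 t ×ˢ Icc 0 T, (∫ v in Ioc p.1 t, α v p.2) ∂μ
      = ∫ v in (0 : ℝ)..t, ∫ p in Icc 0 v ×ˢ Ioc v T, α v p.2 ∂μ := by
  have hαt := hα.mono_measure
    (Measure.prod_mono (Measure.restrict_le_self (s := Icc 0 t ×ˢ Icc 0 T))
      (Measure.restrict_mono (Ioc_subset_Ioc_right htb) le_rfl))
  rw [integral_integral_Ioc_swap (f := fun p v => α v p.2) hαt measurable_fst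
      (ae_restrict_of_forall_mem (measurableSet_Icc.prod measurableSet_Icc) fun p hp => hp.1.1),
    intervalIntegral.integral_of_le ht]
  refine integral_congr_ae ?_
  filter_upwards [ae_restrict_mem measurableSet_Ioc,
    ae_restrict_of_ae (ae_measure_level_set_eq_zero (μ := μ) volume measurable_fst),
    ae_restrict_of_ae (ae_measure_level_set_eq_zero (μ := μ) volume measurable_snd)]
    with v hv hfst hsnd
  exact setIntegral_fst_lt_eq_setIntegral_Icc_prod_Ioc (hα_zero v) hv.2 hfst hsnd

theorem setIntegral_forwardRate_sub_fst {μ : Measure (ℝ × ℝ)} [SFinite μ] {b t T : ℝ}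
    (hg₀ : Integrable (fun p : ℝ × ℝ => g₀ p.2) μ)
    (hα : Integrable (fun q : (ℝ × ℝ) × ℝ => α q.2 q.1.2) (μ.prod (volume.restrict (Ioc 0 b))))
    (ht : 0 ≤ t) (htb : t ≤ b) :
    ∫ p in Icc 0 t ×ˢ Icc 0 T, forwardRate g₀ α t p.2 ∂μ
      - ∫ p in Icc 0 t ×ˢ Icc 0 T, forwardRate g₀ α p.1 p.2 ∂μ
      = ∫ p in Icc 0 t ×ˢ Icc 0 T, (∫ v in Ioc p.1 t, α v p.2) ∂μ := by
  have hB : MeasurableSet (Icc 0 t ×ˢ Icc 0 T : Set (ℝ × ℝ)) :=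
    measurableSet_Icc.prod measurableSet_Icc
  have hgt : Integrable (fun p => forwardRate g₀ α t p.2) μ :=
    integrable_forwardRate hg₀ hα measurable_const (ae_of_all _ fun _ => ⟨ht, htb⟩)
  have hgs : IntegrableOn (fun p => forwardRate g₀ α p.1 p.2) (Icc 0 t ×ˢ Icc 0 T) μ :=
    integrable_forwardRate hg₀.restrict
      (hα.mono_measure (Measure.prod_mono Measure.restrict_le_self le_rfl)) measurable_fst
      (ae_restrict_of_forall_mem hB fun p hp => ⟨hp.1.1, hp.1.2.trans htb⟩)
  rw [← integral_sub hgt.integrableOn hgs]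
  refine setIntegral_congr_ae hB ?_
  filter_upwards [hα.prod_right_ae] with p hp hpB
  exact forwardRate_sub_forwardRate hp hpB.1.1 hpB.1.2 htb

end ForwardRate

theorem stmt5_general (Tb : ℝ) (μ : Measure (ℝ × ℝ)) [IsFiniteMeasure μ]
    (hsupp : μ ((Set.Icc 0 Tb ×ˢ Set.Icc 0 Tb)ᶜ) = 0)
    (hdiag : μ {p : ℝ × ℝ | p.2 ≤ p.1} = 0)
    (g₀ : ℝ → ℝ) (α : ℝ → ℝ → ℝ)
    (hg₀_meas : Measurable g₀) (hα_meas : Measurable (Function.uncurry α))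
    (hα_zero : ∀ v u : ℝ, u < v → α v u = 0)
    (hg₀_int : (∫⁻ p in Set.Icc 0 Tb ×ˢ Set.Icc 0 Tb, ENNReal.ofReal |g₀ p.2| ∂μ) < ⊤)
    (hα_int : (∫⁻ p in Set.Icc 0 Tb ×ˢ Set.Icc 0 Tb,
        (∫⁻ v in Set.Icc (0 : ℝ) Tb, ENNReal.ofReal |α v p.2|) ∂μ) < ⊤) :
    ∀ t T : ℝ, 0 ≤ t → t ≤ T → T ≤ Tb →
      (∫ p in Set.Icc 0 t ×ˢ Set.Ioc t T, (g₀ p.2 + ∫ v in (0 : ℝ)..t, α v p.2) ∂μ)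
        = (∫ v in (0 : ℝ)..t, ∫ p in Set.Icc 0 v ×ˢ Set.Ioc v T, α v p.2 ∂μ)
          + (∫ p in Set.Icc 0 t ×ˢ Set.Icc 0 T,
              (g₀ p.2 + ∫ v in (0 : ℝ)..p.1, α v p.2) ∂μ)
          - ∫ p in Set.Icc 0 Tb ×ˢ Set.Icc 0 t,
              (g₀ p.2 + ∫ v in (0 : ℝ)..p.2, α v p.2) ∂μ := by
  intro t T ht htT hTTb
  have htTb := htT.trans hTTb
  rw [Measure.restrict_eq_self_of_ae_mem (s := Icc 0 Tb ×ˢ Icc 0 Tb) (mem_ae_iff.2 hsupp)]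
    at hg₀_int hα_int
  have hg₀ : Integrable (fun p : ℝ × ℝ => g₀ p.2) μ :=
    ⟨(hg₀_meas.comp measurable_snd).aestronglyMeasurable, by
      simpa only [hasFiniteIntegral_iff_norm, Real.norm_eq_abs] using hg₀_int⟩
  have hα : Integrable (fun q : (ℝ × ℝ) × ℝ => α q.2 q.1.2)
      (μ.prod (volume.restrict (Ioc 0 Tb))) :=
    (integrable_prod_of_lintegral_lt_top
      (hα_meas.comp (measurable_snd.prodMk measurable_fst.snd)) hα_int).mono_measure
      (Measure.prod_mono le_rfl (Measure.restrict_mono Ioc_subset_Icc_self le_rfl))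
  have hgt : IntegrableOn (fun p => forwardRate g₀ α t p.2) (Icc 0 t ×ˢ Icc 0 T) μ :=
    (integrable_forwardRate hg₀ hα measurable_const (ae_of_all _ fun _ => ⟨ht, htTb⟩)).integrableOn
  have hsplit : ∫ p in Icc 0 t ×ˢ Icc 0 T, forwardRate g₀ α t p.2 ∂μ
      = ∫ p in Icc 0 t ×ˢ Icc 0 t, forwardRate g₀ α t p.2 ∂μ
        + ∫ p in Icc 0 t ×ˢ Ioc t T, forwardRate g₀ α t p.2 ∂μ := by
    rw [← Icc_union_Ioc_eq_Icc ht htT, prod_union] at hgt ⊢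
    exact setIntegral_union (disjoint_left.2 fun p hK hA => hA.2.1.not_ge hK.2.2)
      (measurableSet_Icc.prod measurableSet_Ioc) hgt.left_of_union hgt.right_of_union
  change ∫ p in Icc 0 t ×ˢ Ioc t T, forwardRate g₀ α t p.2 ∂μ = _
    + ∫ p in Icc 0 t ×ˢ Icc 0 T, forwardRate g₀ α p.1 p.2 ∂μ
    - ∫ p in Icc 0 Tb ×ˢ Icc 0 t, forwardRate g₀ α p.2 p.2 ∂μ
  rw [setIntegral_forwardRate_self hα_zero (ae_iff.2 (by simpa only [not_lt] using hdiag)) htTb,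
    ← setIntegral_integral_Ioc_fst hα hα_zero ht htTb,
    ← setIntegral_forwardRate_sub_fst hg₀ hα ht htTb]
  linarith

/-- deterministic content of Lemma 4.1 of the paper. For a finite Borel
measure `μ` on the square `[0,T̄] × [0,T̄]` concentrated on `{(s,u) : s < u}` and the
forward rate `g(t,u) = g₀(u) + ∫_0^t α(v,u) dv` (with `α(v,u) = 0` for `u < v`), for all
`0 ≤ t ≤ T ≤ T̄`:
`∫_{[0,t]×(t,T]} g(t,u) dμ(s,u) = ∫_0^t (∫_{[0,v]×(v,T]} α(v,u) dμ(s,u)) dv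
  + ∫_{[0,t]×[0,T]} g(s,u) dμ(s,u) − ∫_{[0,T̄]×[0,t]} g(u,u) dμ(s,u)`. -/
theorem stmt5 (Tb : ℝ) (hTb : 0 < Tb) (μ : Measure (ℝ × ℝ)) [IsFiniteMeasure μ]
    (hsupp : μ ((Set.Icc 0 Tb ×ˢ Set.Icc 0 Tb)ᶜ) = 0)
    (hdiag : μ {p : ℝ × ℝ | p.2 ≤ p.1} = 0)
    (g₀ : ℝ → ℝ) (α : ℝ → ℝ → ℝ)
    (hg₀_meas : Measurable g₀) (hα_meas : Measurable (Function.uncurry α))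
    (hα_zero : ∀ v u : ℝ, u < v → α v u = 0)
    (hg₀_int : (∫⁻ p in Set.Icc 0 Tb ×ˢ Set.Icc 0 Tb, ENNReal.ofReal |g₀ p.2| ∂μ) < ⊤)
    (hα_int : (∫⁻ p in Set.Icc 0 Tb ×ˢ Set.Icc 0 Tb,
        (∫⁻ v in Set.Icc (0 : ℝ) Tb, ENNReal.ofReal |α v p.2|) ∂μ) < ⊤) :
    ∀ t T : ℝ, 0 ≤ t → t ≤ T → T ≤ Tb →
      (∫ p in Set.Icc 0 t ×ˢ Set.Ioc t T, (g₀ p.2 + ∫ v in (0 : ℝ)..t, α v p.2) ∂μ)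
        = (∫ v in (0 : ℝ)..t, ∫ p in Set.Icc 0 v ×ˢ Set.Ioc v T, α v p.2 ∂μ)
          + (∫ p in Set.Icc 0 t ×ˢ Set.Icc 0 T,
              (g₀ p.2 + ∫ v in (0 : ℝ)..p.1, α v p.2) ∂μ)
          - ∫ p in Set.Icc 0 Tb ×ˢ Set.Icc 0 t,
              (g₀ p.2 + ∫ v in (0 : ℝ)..p.2, α v p.2) ∂μ :=
  stmt5_general Tb μ hsupp hdiag g₀ α hg₀_meas hα_meas hα_zero hg₀_int hα_int
end

section
/- Let (E, ℰ) and (F, ℱ) be measurable spaces, ν a finite measure on E, K a finite measure kernel from E to F (so that s ↦ K(s)(F) is measurable and bounded), and ε > 0. Define ν' := the measure with density s ↦ K(s)(F) + ε with respect to ν, and K'(s) := (K(s)(F) + ε)⁻¹ · K(s). Then K' is a measurable kernel from E to F with K'(s)(F) ≤ 1 for every s ∈ E, and the semidirect product measures agree: ν ⊗ K = ν' ⊗ K' as measures on E × F, i.e., for every measurable set S ⊆ E × F, ∫_E K(s)({u : (s,u) ∈ S}) dν(s) = ∫_E K'(s)({u : (s,u) ∈ S}) dν'(s). -/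
open MeasureTheory ProbabilityTheory
open scoped ENNReal

/-!
Dividing the kernel by `f s := K(s)(F) + ε` and multiplying the base measure by the same
density leaves every integral `∫ g dν` unchanged, because `f` is finite (`K` is a finite kernel)
and nonzero (`ε > 0`). The normalized kernel has mass `K(s)(F) / (K(s)(F) + ε) ≤ 1`.
-/

theorem MeasureTheory.lintegral_withDensity_inv_mul {α : Type*} [MeasurableSpace α]
    {μ : Measure α} {f g : α → ℝ≥0∞} (hf : Measurable f) (hf_ne_zero : ∀ᵐ x ∂μ, f x ≠ 0)
    (hf_ne_top : ∀ᵐ x ∂μ, f x ≠ ∞) (hg : Measurable g) :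
    ∫⁻ x, (f x)⁻¹ * g x ∂μ.withDensity f = ∫⁻ x, g x ∂μ := by
  calc ∫⁻ x, (f x)⁻¹ * g x ∂μ.withDensity f
      = ∫⁻ x, g x ∂(μ.withDensity f).withDensity fun x ↦ (f x)⁻¹ :=
        (lintegral_withDensity_eq_lintegral_mul _ hf.inv hg).symm
    _ = ∫⁻ x, g x ∂μ := by rw [withDensity_inv_same hf hf_ne_zero hf_ne_top]

theorem ProbabilityTheory.Kernel.withDensity_apply_eq_smul {α β : Type*} [MeasurableSpace α]
    [MeasurableSpace β] (κ : Kernel α β) [IsSFiniteKernel κ] {f : α → ℝ≥0∞} (hf : Measurable f)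
    (a : α) : κ.withDensity (fun a _ ↦ f a) a = f a • κ a := by
  rw [Kernel.withDensity_apply (f := fun a _ ↦ f a) _ (hf.comp measurable_fst), withDensity_const]

theorem stmt9_general {E F : Type*} [MeasurableSpace E] [MeasurableSpace F]
    (ν : Measure E)
    (K : Kernel E F) [IsFiniteKernel K] (ε : ℝ) (hε : 0 < ε) :
    ∃ K' : Kernel E F,
      (∀ s : E, K' s = (K s Set.univ + ENNReal.ofReal ε)⁻¹ • K s) ∧
      (∀ s : E, K' s Set.univ ≤ 1) ∧
      ∀ S : Set (E × F), MeasurableSet S →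
        (∫⁻ s, K s (Prod.mk s ⁻¹' S) ∂ν)
          = ∫⁻ s, K' s (Prod.mk s ⁻¹' S)
              ∂(ν.withDensity fun s => K s Set.univ + ENNReal.ofReal ε) := by
  set f : E → ℝ≥0∞ := fun s ↦ K s Set.univ + ENNReal.ofReal ε
  have hf : Measurable f := (K.measurable_coe MeasurableSet.univ).add_const _
  have hf_ne_zero (s : E) : f s ≠ 0 := by simp [f, hε]
  have hf_ne_top (s : E) : f s ≠ ∞ := by simp [f, measure_ne_top]
  have hK' (s : E) : K.withDensity (fun s _ ↦ (f s)⁻¹) s = (f s)⁻¹ • K s :=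
    K.withDensity_apply_eq_smul hf.inv s
  refine ⟨K.withDensity fun s _ ↦ (f s)⁻¹, hK', fun s ↦ ?_, fun S hS ↦ ?_⟩
  · rw [hK', Measure.smul_apply, smul_eq_mul]
    exact (mul_le_mul_right le_self_add _).trans (ENNReal.inv_mul_le_one _)
  · simp only [hK', Measure.smul_apply, smul_eq_mul]
    exact (lintegral_withDensity_inv_mul hf (.of_forall hf_ne_zero) (.of_forall hf_ne_top)
      (K.measurable_kernel_prodMk_left hS)).symm

/-- normalization of a finite kernel. Given a finite measure `ν` on `E`, a
finite kernel `K` from `E` to `F` and `ε > 0`, setting `ν' := (K(·)(F) + ε) · ν` and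
`K'(s) := (K(s)(F) + ε)⁻¹ • K(s)`, the kernel `K'` is a sub-probability kernel
(`K'(s)(F) ≤ 1`) and the semidirect products agree:
`∫ K(s)(S_s) dν(s) = ∫ K'(s)(S_s) dν'(s)` for every measurable `S ⊆ E × F`. -/
theorem stmt9 {E F : Type*} [MeasurableSpace E] [MeasurableSpace F]
    (ν : Measure E) [IsFiniteMeasure ν]
    (K : Kernel E F) [IsFiniteKernel K] (ε : ℝ) (hε : 0 < ε) :
    ∃ K' : Kernel E F,
      (∀ s : E, K' s = (K s Set.univ + ENNReal.ofReal ε)⁻¹ • K s) ∧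
      (∀ s : E, K' s Set.univ ≤ 1) ∧
      ∀ S : Set (E × F), MeasurableSet S →
        (∫⁻ s, K s (Prod.mk s ⁻¹' S) ∂ν)
          = ∫⁻ s, K' s (Prod.mk s ⁻¹' S)
              ∂(ν.withDensity fun s => K s Set.univ + ENNReal.ofReal ε) :=
  stmt9_general ν K ε hε
end
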